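/- arXiv:0905.4395 — 2 statements merged into one kernel-verified Lean document; each statement's English description precedes it below -/
import Mathlib

section
/- A group G satisfies the ascending chain condition on subgroups if and only if it satisfies the ascending chain condition on cosets (subsets A with A·A⁻¹·A ⊆ A). -/
/-!
A subgroup is a coset, so the chain condition on cosets implies it on subgroups. Conversely, a
nonempty coset `A` is a translate `a • (A⁻¹ * A)` of the subgroup `A⁻¹ * A`, for any `a ∈ A`.
Once an ascending chain of cosets contains a point `a`, it is the translate by `a` of the chain of
subgroups `⟨Aᵢ⁻¹ * Aᵢ⟩`, which stabilizes; taking generated subgroups keeps this chain defined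
(and monotone) also at the indices where `Aᵢ` is still empty.
-/

open Pointwise Filter

namespace Set

variable {G : Type*} [Group G]

def IsCoset (A : Set G) : Prop :=
  A * A⁻¹ * A ⊆ A

theorem IsCoset.mul_inv_mul_mem {A : Set G} (hA : IsCoset A) {x y z : G} (hx : x ∈ A)
    (hy : y ∈ A) (hz : z ∈ A) : x * y⁻¹ * z ∈ A :=
  hA (mul_mem_mul (mul_mem_mul hx (inv_mem_inv.mpr hy)) hz)

theorem _root_.Subgroup.isCoset (H : Subgroup G) : IsCoset (H : Set G) := by
  rw [IsCoset, inv_coe_set, coe_mul_coe, coe_mul_coe]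

def IsCoset.subgroupOfMem {A : Set G} (hA : IsCoset A) {a : G} (ha : a ∈ A) : Subgroup G where
  carrier := a⁻¹ • A
  one_mem' := by simpa [mem_smul_set_iff_inv_smul_mem] using ha
  mul_mem' {x y} hx hy := by
    simp only [mem_smul_set_iff_inv_smul_mem, inv_inv, smul_eq_mul] at hx hy ⊢
    simpa [mul_assoc] using hA.mul_inv_mul_mem hx ha hy
  inv_mem' {x} hx := by
    simp only [mem_smul_set_iff_inv_smul_mem, inv_inv, smul_eq_mul] at hx ⊢
    simpa [mul_assoc] using hA.mul_inv_mul_mem ha hx ha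

theorem IsCoset.closure_inv_mul_eq_subgroupOfMem {A : Set G} (hA : IsCoset A) {a : G}
    (ha : a ∈ A) : Subgroup.closure (A⁻¹ * A) = hA.subgroupOfMem ha := by
  apply le_antisymm
  · rw [Subgroup.closure_le]
    rintro _ ⟨_, hx, y, hy, rfl⟩
    change _ ∈ a⁻¹ • A
    rw [mem_smul_set_iff_inv_smul_mem, inv_inv, smul_eq_mul, ← mul_assoc]
    simpa using hA.mul_inv_mul_mem ha (mem_inv.mp hx) hy
  · intro x hx
    change x ∈ a⁻¹ • A at hx
    obtain ⟨y, hy, rfl⟩ := hx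
    exact Subgroup.subset_closure (mul_mem_mul (inv_mem_inv.mpr ha) hy)

theorem IsCoset.smul_closure_inv_mul {A : Set G} (hA : IsCoset A) {a : G} (ha : a ∈ A) :
    a • (Subgroup.closure (A⁻¹ * A) : Set G) = A := by
  rw [hA.closure_inv_mul_eq_subgroupOfMem ha]
  exact smul_inv_smul a A

theorem eventuallyConst_of_isCoset_of_monotone
    (hG : ∀ f : ℕ → Subgroup G, Monotone f → EventuallyConst f atTop) {f : ℕ → Set G}
    (hcoset : ∀ i, IsCoset (f i)) (hmono : Monotone f) : EventuallyConst f atTop := by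
  by_cases hne : ∃ N, (f N).Nonempty
  · obtain ⟨N, a, ha⟩ := hne
    let g : ℕ → Subgroup G := fun i => Subgroup.closure ((f i)⁻¹ * f i)
    have hg : Monotone g := fun i j hij =>
      Subgroup.closure_mono (mul_subset_mul (inv_subset_inv.mpr (hmono hij)) (hmono hij))
    have htranslate : (fun i => a • (g i : Set G)) =ᶠ[atTop] f :=
      eventually_atTop.mpr ⟨N, fun i hi => (hcoset i).smul_closure_inv_mul (hmono hi ha)⟩
    exact ((hG g hg).comp fun H : Subgroup G => a • (H : Set G)).congr htranslate
  · simp only [not_exists, not_nonempty_iff_eq_empty] at hne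
    exact (EventuallyConst.const ∅).congr (.of_forall fun i => (hne i).symm)

end Set

open Set in
theorem acc_subgroups_iff_acc_cosets {G : Type*} [Group G] :
    (∀ f : ℕ → Subgroup G, Monotone f → ∃ n, ∀ m, n ≤ m → f m = f n) ↔
      (∀ f : ℕ → Set G, (∀ i, f i * (f i)⁻¹ * f i ⊆ f i) → Monotone f →
        ∃ n, ∀ m, n ≤ m → f m = f n) := by
  simp only [← eventuallyConst_atTop]
  refine ⟨fun hG f hcoset hmono => eventuallyConst_of_isCoset_of_monotone hG hcoset hmono,
    fun hcoset f hmono => ?_⟩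
  obtain ⟨n, hn⟩ := eventuallyConst_atTop.mp <| hcoset (fun i => (f i : Set G))
    (fun i => (f i).isCoset) fun _ _ hij => SetLike.coe_subset_coe.mpr (hmono hij)
  exact eventuallyConst_atTop.mpr ⟨n, fun m hm => SetLike.coe_injective (hn m hm)⟩
end

section
/- Let G be a group, A a nonempty coset of G, g ∈ A, and H = A·A⁻¹. If {gᵢ : i ∈ I} generates H as a subgroup, then the coset generated by {gᵢg : i ∈ I} ∪ {g} equals A. -/
open Pointwise

/-- A coset of a group `G` is a subset closed under `(x, y, z) ↦ x * y⁻¹ * z`. -/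
def IsCoset {G : Type*} [Group G] (A : Set G) : Prop := A * A⁻¹ * A ⊆ A

/-- The smallest coset containing a given subset. -/
def cosetClosure {G : Type*} [Group G] (X : Set G) : Set G :=
  ⋂₀ {A : Set G | IsCoset A ∧ X ⊆ A}

/-! If `B` is a coset and `g ∈ B`, then `B * g⁻¹` is a subgroup. Hence every coset containing
`g` and all `gᵢ * g` contains `⟨gᵢ⟩ * g = A * A⁻¹ * g = A`, while `A` is itself such a coset. -/

namespace IsCoset

variable {G : Type*} [Group G] {B : Set G}

theorem mul_inv_mul_mem (hB : IsCoset B) {a b c : G} (ha : a ∈ B) (hb : b ∈ B) (hc : c ∈ B) :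
    a * b⁻¹ * c ∈ B :=
  hB (Set.mul_mem_mul (Set.mul_mem_mul ha (Set.inv_mem_inv.2 hb)) hc)

def subgroup (hB : IsCoset B) {g : G} (hg : g ∈ B) : Subgroup G where
  carrier := {h | h * g ∈ B}
  one_mem' := by simpa using hg
  mul_mem' {x y} hx hy := by
    simpa [mul_assoc] using hB.mul_inv_mul_mem hx hg hy
  inv_mem' {x} hx := by
    simpa [mul_assoc] using hB.mul_inv_mul_mem hg hx hg

theorem mul_mem_of_mem_closure (hB : IsCoset B) {g : G} (hg : g ∈ B) {S : Set G}
    (hS : ∀ s ∈ S, s * g ∈ B) {h : G} (hh : h ∈ Subgroup.closure S) : h * g ∈ B :=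
  (Subgroup.closure_le (hB.subgroup hg)).2 hS hh

end IsCoset

section cosetClosure

variable {G : Type*} [Group G] {X A : Set G}

theorem cosetClosure_subset (hA : IsCoset A) (hXA : X ⊆ A) : cosetClosure X ⊆ A :=
  Set.sInter_subset_of_mem ⟨hA, hXA⟩

theorem mem_cosetClosure {x : G} :
    x ∈ cosetClosure X ↔ ∀ B : Set G, IsCoset B → X ⊆ B → x ∈ B := by
  simp [cosetClosure]

end cosetClosure

theorem cosetClosure_of_subgroup_generators_general {G : Type*} [Group G] (A : Set G)
    (hA : IsCoset A) (g : G) (hg : g ∈ A)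
    {I : Type*} (gi : I → G)
    (hgen : (Subgroup.closure (Set.range gi) : Set G) = A * A⁻¹) :
    cosetClosure (Set.range (fun i => gi i * g) ∪ {g}) = A := by
  have hgi_mem (i : I) : gi i ∈ A * A⁻¹ := hgen ▸ Subgroup.subset_closure ⟨i, rfl⟩
  apply subset_antisymm
  · refine cosetClosure_subset hA ?_
    rintro x (⟨i, rfl⟩ | rfl)
    · exact hA (Set.mul_mem_mul (hgi_mem i) hg)
    · exact hg
  · intro a ha
    refine mem_cosetClosure.2 fun B hB hXB => ?_
    have hgB : g ∈ B := hXB (Or.inr rfl)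
    have hag : a * g⁻¹ ∈ Subgroup.closure (Set.range gi) := by
      rw [← SetLike.mem_coe, hgen]
      exact Set.mul_mem_mul ha (Set.inv_mem_inv.2 hg)
    simpa using hB.mul_mem_of_mem_closure hgB
      (by rintro _ ⟨i, rfl⟩; exact hXB (Or.inl ⟨i, rfl⟩)) hag

theorem cosetClosure_of_subgroup_generators {G : Type*} [Group G] (A : Set G)
    (hA : IsCoset A) (hne : A.Nonempty) (g : G) (hg : g ∈ A)
    {I : Type*} (gi : I → G)
    (hgen : (Subgroup.closure (Set.range gi) : Set G) = A * A⁻¹) :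
    cosetClosure (Set.range (fun i => gi i * g) ∪ {g}) = A :=
  cosetClosure_of_subgroup_generators_general A hA g hg gi hgen
end
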